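/- arXiv:1603.00774 — 7 statements merged into one kernel-verified Lean document; each statement's English description precedes it below -/
import Mathlib

section
/- For every integer n ≥ 1, ∑_{m=1}^{n-1} σ_3(m) σ_3(n − m) = (σ_7(n) − σ_3(n)) / 120, where σ_j(n) = ∑_{d | n} d^j. -/
/-! Liouville's elementary method. Write the convolution sum as `W = ∑ (x y)³` over the
quadruples `a x + b y = n` of positive integers, and put `h(u, v) = (u v (u + v))²`,
`k(u, v) = (u v (u - v))²`, so that `h - k = 4 (u v)³`. The shear
`(a, x, b, y) ↦ (x + y, b, x, a - b)` is an involution of the quadruples with `b < a` which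
turns `h(x, y)` into `k(a, b)`. Both `h(x, y)` and `k(a, b)` are invariant under exchanging
`(a, x)` with `(b, y)`, so their sums are twice the part over `b < a` plus the diagonal `a = b`,
where `k` vanishes; and `(a, x, b, y) ↦ (x, a, y, b)` shows that `k(a, b)` and `k(x, y)` have the
same sum. Hence `4 W` is the sum of `h(x, y)` over the diagonal, that is
`∑_{e ∣ n} e² ∑_{0 < x < e} x² (e - x)² = (σ₇(n) - σ₃(n)) / 30`. -/

open Finset ArithmeticFunction

namespace SigmaConvolution

/-- The quadruples `((a, x), (b, y))` of positive integers with `a * x + b * y = n`. -/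
def quadruples (n : ℕ) : Finset ((ℕ × ℕ) × (ℕ × ℕ)) :=
  (Ico 1 n).biUnion fun m => m.divisorsAntidiagonal ×ˢ (n - m).divisorsAntidiagonal

theorem mem_quadruples {n : ℕ} {t : (ℕ × ℕ) × (ℕ × ℕ)} :
    t ∈ quadruples n ↔
      0 < t.1.1 ∧ 0 < t.1.2 ∧ 0 < t.2.1 ∧ 0 < t.2.2 ∧ t.1.1 * t.1.2 + t.2.1 * t.2.2 = n := by
  obtain ⟨⟨a, x⟩, b, y⟩ := t
  simp only [quadruples, mem_biUnion, mem_Ico, mem_product, Nat.mem_divisorsAntidiagonal]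
  constructor
  · rintro ⟨m, ⟨hm, hmn⟩, ⟨rfl, -⟩, hby, -⟩
    have hax := Nat.mul_ne_zero_iff.mp (Nat.one_le_iff_ne_zero.mp hm)
    have hby' := Nat.mul_ne_zero_iff.mp (hby ▸ Nat.sub_ne_zero_of_lt hmn)
    omega
  · rintro ⟨ha, hx, hb, hy, rfl⟩
    have := Nat.mul_pos ha hx
    have := Nat.mul_pos hb hy
    exact ⟨a * x, ⟨by omega, by omega⟩, ⟨rfl, by omega⟩, by omega, by omega⟩

theorem sum_sigma_mul_sigma {R : Type*} [CommSemiring R] (k n : ℕ) :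
    ∑ m ∈ Ico 1 n, (sigma k m : R) * sigma k (n - m)
      = ∑ t ∈ quadruples n, ((t.1.2 : R) * t.2.2) ^ k := by
  have hσ (m : ℕ) : (sigma k m : R) = ∑ p ∈ m.divisorsAntidiagonal, (p.2 : R) ^ k := by
    rw [Nat.sum_divisorsAntidiagonal' (f := fun _ d => (d : R) ^ k), sigma_apply]
    push_cast
    rfl
  have hdisj : (Ico 1 n : Set ℕ).PairwiseDisjoint
      fun m => m.divisorsAntidiagonal ×ˢ (n - m).divisorsAntidiagonal := by
    intro m₁ _ m₂ _ hne
    refine disjoint_left.mpr fun t h₁ h₂ => hne ?_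
    simp only [mem_product, Nat.mem_divisorsAntidiagonal] at h₁ h₂
    exact h₁.1.1.symm.trans h₂.1.1
  rw [quadruples, sum_biUnion hdisj]
  refine sum_congr rfl fun m _ => ?_
  rw [hσ, hσ, sum_mul_sum, sum_product]
  simp only [mul_pow]

variable {M : Type*} [AddCommMonoid M]

theorem sum_quadruples_eq_two_nsmul_add (n : ℕ) (F : (ℕ × ℕ) × (ℕ × ℕ) → M)
    (hF : ∀ t, F t.swap = F t) :
    ∑ t ∈ quadruples n, F t = 2 • ∑ t ∈ (quadruples n).filter (fun t => t.2.1 < t.1.1), F t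
      + ∑ t ∈ (quadruples n).filter (fun t => t.1.1 = t.2.1), F t := by
  have hsplit := sum_filter_add_sum_filter_not (quadruples n) (fun t => t.2.1 < t.1.1) F
  have hsplit' := sum_filter_add_sum_filter_not
    ((quadruples n).filter fun t => ¬ t.2.1 < t.1.1) (fun t => t.1.1 = t.2.1) F
  rw [filter_filter, filter_filter] at hsplit'
  have hlower : ∑ t ∈ (quadruples n).filter (fun t => ¬ t.2.1 < t.1.1 ∧ ¬ t.1.1 = t.2.1), F t
      = ∑ t ∈ (quadruples n).filter (fun t => t.2.1 < t.1.1), F t := by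
    refine sum_nbij' Prod.swap Prod.swap ?_ ?_ (fun _ _ => rfl) (fun _ _ => rfl)
      (fun t _ => (hF t).symm) <;>
    · rintro ⟨⟨a, x⟩, b, y⟩ ht
      simp only [mem_filter, mem_quadruples, Prod.swap] at ht ⊢
      omega
  have hdiag : (quadruples n).filter (fun t => ¬ t.2.1 < t.1.1 ∧ t.1.1 = t.2.1)
      = (quadruples n).filter (fun t => t.1.1 = t.2.1) :=
    filter_congr fun _ _ => by omega
  rw [← hsplit, ← hsplit', hlower, hdiag, two_nsmul]
  abel

theorem sum_quadruples_comp_map_swap (n : ℕ) (F : (ℕ × ℕ) × (ℕ × ℕ) → M) :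
    ∑ t ∈ quadruples n, F (t.1.swap, t.2.swap) = ∑ t ∈ quadruples n, F t := by
  refine sum_nbij' (fun t => (t.1.swap, t.2.swap)) (fun t => (t.1.swap, t.2.swap)) ?_ ?_
    (fun _ _ => rfl) (fun _ _ => rfl) (fun _ _ => rfl) <;>
  · rintro ⟨⟨a, x⟩, b, y⟩ ht
    simp only [mem_quadruples, Prod.swap] at ht ⊢
    refine ⟨ht.2.1, ht.1, ht.2.2.2.1, ht.2.2.1, ?_⟩
    rw [mul_comm x, mul_comm y]
    exact ht.2.2.2.2

def shear (t : (ℕ × ℕ) × (ℕ × ℕ)) : (ℕ × ℕ) × (ℕ × ℕ) :=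
  ((t.1.2 + t.2.2, t.2.1), (t.1.2, t.1.1 - t.2.1))

theorem shear_mem {n : ℕ} {t : (ℕ × ℕ) × (ℕ × ℕ)}
    (ht : t ∈ (quadruples n).filter fun t => t.2.1 < t.1.1) :
    shear t ∈ (quadruples n).filter fun t => t.2.1 < t.1.1 := by
  obtain ⟨⟨a, x⟩, b, y⟩ := t
  simp only [shear, mem_filter, mem_quadruples] at ht ⊢
  obtain ⟨⟨ha, hx, hb, hy, rfl⟩, hba⟩ := ht
  obtain ⟨c, rfl⟩ := Nat.exists_eq_add_of_lt hba
  refine ⟨⟨by omega, hb, hx, by omega, ?_⟩, by omega⟩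
  rw [show b + c + 1 - b = c + 1 by omega]
  ring

theorem shear_shear {t : (ℕ × ℕ) × (ℕ × ℕ)} (h : t.2.1 ≤ t.1.1) : shear (shear t) = t := by
  obtain ⟨⟨a, x⟩, b, y⟩ := t
  simp only [shear] at h ⊢
  congr <;> omega

theorem sum_comp_shear (n : ℕ) (F : (ℕ × ℕ) × (ℕ × ℕ) → M) :
    ∑ t ∈ (quadruples n).filter (fun t => t.2.1 < t.1.1), F (shear t)
      = ∑ t ∈ (quadruples n).filter (fun t => t.2.1 < t.1.1), F t :=
  sum_nbij' shear shear (fun _ => shear_mem) (fun _ => shear_mem)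
    (fun _ ht => shear_shear (mem_filter.mp ht).2.le)
    (fun _ ht => shear_shear (mem_filter.mp ht).2.le) fun _ _ => rfl

theorem sum_quadruples_filter_eq_sum_divisors (n : ℕ) (f : ℕ → ℕ → M) :
    ∑ t ∈ (quadruples n).filter (fun t => t.1.1 = t.2.1), f t.1.2 t.2.2
      = ∑ e ∈ n.divisors, ∑ x ∈ Ico 1 e, f x (e - x) := by
  rw [sum_sigma']
  refine sum_nbij' (fun t => ⟨t.1.2 + t.2.2, t.1.2⟩)
    (fun p => ((n / p.1, p.2), (n / p.1, p.1 - p.2))) ?_ ?_ ?_ ?_ ?_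
  · rintro ⟨⟨a, x⟩, b, y⟩ ht
    simp only [mem_filter, mem_quadruples] at ht
    obtain ⟨⟨ha, hx, -, hy, rfl⟩, rfl⟩ := ht
    simp only [mem_sigma, Nat.mem_divisors, mem_Ico]
    refine ⟨⟨⟨a, by ring⟩, by positivity⟩, hx, by omega⟩
  · rintro ⟨e, x⟩ hp
    simp only [mem_sigma, Nat.mem_divisors, mem_Ico] at hp
    obtain ⟨⟨⟨d, rfl⟩, hn⟩, hx, hxe⟩ := hp
    have hd : 0 < d := Nat.pos_of_ne_zero (right_ne_zero_of_mul hn)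
    simp only [mem_filter, mem_quadruples, Nat.mul_div_cancel_left _ (by omega : 0 < e)]
    refine ⟨⟨hd, hx, hd, by omega, ?_⟩, trivial⟩
    rw [← Nat.mul_add, Nat.add_sub_cancel' hxe.le, mul_comm]
  · rintro ⟨⟨a, x⟩, b, y⟩ ht
    simp only [mem_filter, mem_quadruples] at ht
    obtain ⟨⟨ha, hx, -, hy, rfl⟩, rfl⟩ := ht
    simp only [← Nat.mul_add, Nat.mul_div_cancel _ (by omega : 0 < x + y),
      Nat.add_sub_cancel_left]
  · rintro ⟨e, x⟩ hp
    simp only [mem_sigma, mem_Ico] at hp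
    simp only [Nat.add_sub_cancel' hp.2.2.le]
  · intro _ _
    simp only [Nat.add_sub_cancel_left]

theorem sum_range_mul_sub_sq (e : ℕ) (c : ℚ) :
    ∑ x ∈ range e, ((x : ℚ) * (c - x)) ^ 2
      = c ^ 2 * (e * (e - 1) * (2 * e - 1) / 6) - 2 * c * (e * (e - 1) / 2) ^ 2
        + e * (e - 1) * (2 * e - 1) * (3 * e ^ 2 - 3 * e - 1) / 30 := by
  induction e with
  | zero => simp
  | succ e ih =>
    rw [sum_range_succ, ih]
    push_cast
    ring

theorem sum_Ico_mul_sub_sq (e : ℕ) :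
    ∑ x ∈ Ico 1 e, ((x : ℚ) * (e - x)) ^ 2 = ((e : ℚ) ^ 5 - e) / 30 := by
  rw [sum_subset (fun x hx => mem_range.mpr (mem_Ico.mp hx).2), sum_range_mul_sub_sq]
  · ring
  · intro x hx hx'
    simp only [mem_range, mem_Ico, not_and, not_lt] at hx hx'
    obtain rfl : x = 0 := by omega
    simp

theorem four_mul_sum_quadruples_cube (n : ℕ) :
    4 * ∑ t ∈ quadruples n, ((t.1.2 : ℚ) * t.2.2) ^ 3
      = ∑ t ∈ (quadruples n).filter (fun t => t.1.1 = t.2.1),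
          ((t.1.2 : ℚ) * t.2.2 * (t.1.2 + t.2.2)) ^ 2 := by
  set h : ℕ → ℕ → ℚ := fun u v => (u * v * ((u : ℚ) + v)) ^ 2 with h_def
  set k : ℕ → ℕ → ℚ := fun u v => (u * v * ((u : ℚ) - v)) ^ 2 with k_def
  change _ = ∑ t ∈ (quadruples n).filter (fun t => t.1.1 = t.2.1), h t.1.2 t.2.2
  have hshear : ∑ t ∈ (quadruples n).filter (fun t => t.2.1 < t.1.1), h t.1.2 t.2.2
      = ∑ t ∈ (quadruples n).filter (fun t => t.2.1 < t.1.1), k t.1.1 t.2.1 := by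
    rw [← sum_comp_shear]
    refine sum_congr rfl fun t ht => ?_
    simp only [shear, h_def, k_def, Nat.cast_sub (mem_filter.mp ht).2.le]
    ring
  have hh_split := sum_quadruples_eq_two_nsmul_add n (fun t => h t.1.2 t.2.2)
    fun t => by simp only [h_def, Prod.fst_swap, Prod.snd_swap]; ring
  have hk_split := sum_quadruples_eq_two_nsmul_add n (fun t => k t.1.1 t.2.1)
    fun t => by simp only [k_def, Prod.fst_swap, Prod.snd_swap]; ring
  have hk_diag : ∑ t ∈ (quadruples n).filter (fun t => t.1.1 = t.2.1), k t.1.1 t.2.1 = 0 :=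
    sum_eq_zero fun t ht => by simp [k_def, (mem_filter.mp ht).2]
  have hk_transpose := sum_quadruples_comp_map_swap n (fun t => k t.1.1 t.2.1)
  have hcube : ∑ t ∈ quadruples n, ((t.1.2 : ℚ) * t.2.2) ^ 3 * 4
      = ∑ t ∈ quadruples n, (h t.1.2 t.2.2 - k t.1.2 t.2.2) :=
    sum_congr rfl fun t _ => by simp only [h_def, k_def]; ring
  simp only [Prod.fst_swap] at hk_transpose
  rw [← sum_mul, sum_sub_distrib] at hcube
  simp only [nsmul_eq_mul, Nat.cast_ofNat] at hh_split hk_split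
  linear_combination hcube + hh_split - hk_transpose - hk_split - hk_diag + 2 * hshear

theorem sum_filter_quadruples_eq_sigma_sub_sigma (n : ℕ) :
    ∑ t ∈ (quadruples n).filter (fun t => t.1.1 = t.2.1),
        ((t.1.2 : ℚ) * t.2.2 * (t.1.2 + t.2.2)) ^ 2
      = ((sigma 7 n : ℚ) - sigma 3 n) / 30 := by
  rw [sum_quadruples_filter_eq_sum_divisors n fun x y => ((x : ℚ) * y * (x + y)) ^ 2,
    sigma_apply, sigma_apply]
  push_cast
  rw [← sum_sub_distrib, sum_div]
  refine sum_congr rfl fun e _ => ?_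
  calc ∑ x ∈ Ico 1 e, ((x : ℚ) * ↑(e - x) * (x + ↑(e - x))) ^ 2
      = (e : ℚ) ^ 2 * ∑ x ∈ Ico 1 e, ((x : ℚ) * (e - x)) ^ 2 := by
        rw [mul_sum]
        refine sum_congr rfl fun x hx => ?_
        rw [Nat.cast_sub (mem_Ico.mp hx).2.le]
        ring
    _ = ((e : ℚ) ^ 7 - e ^ 3) / 30 := by
        rw [sum_Ico_mul_sub_sq]
        ring

end SigmaConvolution

theorem hurwitz_sigma_convolution_general (n : ℕ) :
    (∑ m ∈ Finset.Ico 1 n, ((sigma 3 m : ℚ) * (sigma 3 (n - m) : ℚ)))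
      = ((sigma 7 n : ℚ) - (sigma 3 n : ℚ)) / 120 := by
  rw [SigmaConvolution.sum_sigma_mul_sigma]
  linear_combination (SigmaConvolution.four_mul_sum_quadruples_cube n
    + SigmaConvolution.sum_filter_quadruples_eq_sigma_sub_sigma n) / 4

/-- Hurwitz convolution identity: for `n ≥ 1`,
`∑_{m=1}^{n-1} σ₃(m) σ₃(n−m) = (σ₇(n) − σ₃(n)) / 120`. -/
theorem hurwitz_sigma_convolution (n : ℕ) (hn : 1 ≤ n) :
    (∑ m ∈ Finset.Ico 1 n, ((sigma 3 m : ℚ) * (sigma 3 (n - m) : ℚ)))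
      = ((sigma 7 n : ℚ) - (sigma 3 n : ℚ)) / 120 :=
  hurwitz_sigma_convolution_general n
end

section
/- Let N be a positive integer, (u,v) ∈ (Z/NZ)^2 with gcd(u,v,N)=1, let S be the set of primes dividing both N and u, S̄ the remaining primes dividing N, and let N' be the (additive) order of uv in Z/NZ. Choose n with n ≡ uv mod N_{S̄} and n ≡ −uv mod N_S. Then there exists an integer matrix [[A,B],[C,D]] with AD − BC = N_S N'_S, A ≡ u N'_S mod N_{S̄}, B ≡ v / N_{S̄} mod N_S, and divisibilities N_S N'_S | A, N_S N'_S | D, N N' | C, N_{S̄} N'_{S̄} | B, such that for any g ∈ SL_2(Z) whose bottom row is congruent to (u,v) mod N, one has the equality of cosets Γ_1(N) g = Γ_1(N) · [[0,−1],[N,0]] · [[1, n/N],[0,1]] · [[A,B],[C,D]] · [[N N'_S, 0],[0, N_S]]^{−1}. -/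
/-
Write `N = a b`, `N' = a' b'` with `a = N_S`, `b = N_{S̄}`, `a' = N'_S`, `b' = N'_{S̄}`, and look
for `A = a a' α`, `B = b b' β`, `C = N N' γ`, `D = a a' δ`. Then `AD - BC = a a'` is the Bézout
identity `a a' α δ - (b b')² β γ = 1`, and the representative
`R = [[0,-1],[N,n]]·[[A,B],[C,D]]·diag(N a', a)⁻¹` is an integral matrix of determinant 1.
The choice of `α`, `β` (Chinese remainder theorem) and of `n` makes the bottom row of `R`
congruent to `(u, v)` modulo `a` and modulo `b`, hence modulo `N`, so `g R⁻¹ ∈ Γ₁(N)` for every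
`g ∈ SL₂(ℤ)` with that bottom row. The Bézout identity is solvable because the primes of `a'`
divide `a`, those of `b'` divide `b`, `v` is prime to `a` and `u` is prime to `b`.
-/

lemma Int.isCoprime_natCast_of_forall_prime_dvd {x : ℤ} {m : ℕ}
    (h : ∀ p : ℕ, p.Prime → (p : ℤ) ∣ x → p ∣ m → False) : IsCoprime x m :=
  Int.isCoprime_iff_gcd_eq_one.mpr <|
    Nat.coprime_of_dvd fun p hp hx hm => h p hp (Int.natCast_dvd.mpr hx) hm

lemma IsCoprime.not_prime_dvd {x : ℤ} {m p : ℕ} (h : IsCoprime x m) (hp : p.Prime)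
    (hx : (p : ℤ) ∣ x) (hm : p ∣ m) : False :=
  hp.one_lt.ne' <| Nat.isUnit_iff.mp <| Int.ofNat_isUnit.mp <|
    h.isUnit_of_dvd' hx (Int.natCast_dvd_natCast.mpr hm)

lemma IsCoprime.of_forall_prime_dvd_imp {x : ℤ} {m m' : ℕ} (h : IsCoprime x m)
    (hm : ∀ p : ℕ, p.Prime → p ∣ m' → p ∣ m) : IsCoprime x m' :=
  Int.isCoprime_natCast_of_forall_prime_dvd fun p hp hx hm' => h.not_prime_dvd hp hx (hm p hp hm')

lemma IsCoprime.of_modEq {x y m : ℤ} (h : IsCoprime x m) (hxy : x ≡ y [ZMOD m]) :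
    IsCoprime y m := by
  obtain ⟨k, hk⟩ := (Int.modEq_iff_dvd.mp hxy)
  simpa [show y = x + m * k by linarith] using h.add_mul_left_left k

lemma Int.exists_mul_modEq_and_modEq {c m n : ℤ} (hc : IsCoprime c m) (hmn : IsCoprime m n)
    (x y : ℤ) : ∃ z, c * z ≡ x [ZMOD m] ∧ z ≡ y [ZMOD n] := by
  obtain ⟨s, t, hst⟩ := hc
  obtain ⟨p, q, hpq⟩ := hmn
  refine ⟨s * x * q * n + y * p * m, Int.modEq_iff_dvd.mpr ⟨x * p + t * x * q * n - c * y * p, ?_⟩,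
    Int.modEq_iff_dvd.mpr ⟨y * q - s * x * q, ?_⟩⟩
  · linear_combination (-x * q * n) * hst - x * hpq
  · linear_combination -y * hpq

lemma exists_merel_coefficients {a b a' b' : ℕ} {u v : ℤ} (hab : a.Coprime b)
    (hub : IsCoprime u b) (hva : IsCoprime v a)
    (ha' : ∀ p : ℕ, p.Prime → p ∣ a' → p ∣ a) (hb' : ∀ p : ℕ, p.Prime → p ∣ b' → p ∣ b) :
    ∃ α β γ δ : ℤ, a * a' * α * δ - ((b : ℤ) * b') ^ 2 * β * γ = 1 ∧
      a * α ≡ u [ZMOD b] ∧ (b : ℤ) ^ 2 * b' * β ≡ v [ZMOD a] := by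
  have hab : IsCoprime (a : ℤ) b := Nat.isCoprime_iff_coprime.mpr hab
  have hab' : IsCoprime (a : ℤ) b' := hab.of_forall_prime_dvd_imp hb'
  obtain ⟨β, hβv, hβ1⟩ :=
    Int.exists_mul_modEq_and_modEq (hab.symm.pow_left.mul_left hab'.symm) hab v 1
  -- `β ≡ 1 [b]` lets us take `α ≡ 1 [β]`, which makes `α` and `β` coprime.
  have hβb : IsCoprime β b := isCoprime_one_left.of_modEq hβ1.symm
  obtain ⟨α, hαu, hα1⟩ := Int.exists_mul_modEq_and_modEq hab hβb.symm u 1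
  have hβa : IsCoprime β a := (hva.of_modEq hβv.symm).of_mul_left_right
  have hαb : IsCoprime α b := (hub.of_modEq hαu.symm).of_mul_left_right
  have hαβ : IsCoprime α β := isCoprime_one_left.of_modEq hα1.symm
  have hcopY : ∀ x : ℤ, IsCoprime x b → IsCoprime x β → IsCoprime x (((b : ℤ) * b') ^ 2 * β) :=
    fun x hxb hxβ => ((hxb.mul_right (hxb.of_forall_prime_dvd_imp hb')).pow_right).mul_right hxβ
  have ha'b : IsCoprime (a' : ℤ) b := (hab.symm.of_forall_prime_dvd_imp ha').symm
  have ha'β : IsCoprime (a' : ℤ) β := (hβa.of_forall_prime_dvd_imp ha').symm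
  obtain ⟨δ, γ, h⟩ : IsCoprime ((a : ℤ) * a' * α) (((b : ℤ) * b') ^ 2 * β) :=
    ((hcopY a hab hβa.symm).mul_left (hcopY a' ha'b ha'β)).mul_left (hcopY α hαb hαβ)
  exact ⟨α, β, -γ, δ, by linear_combination h, hαu, hβv⟩

/-- `M = m * m'` with `m` the part of `M` supported on the primes dividing `u`
(the paper's `N_S` and `N_{S̄}`). -/
def IsSplitAlong (u : ℤ) (M m m' : ℕ) : Prop :=
  m * m' = M ∧ m.Coprime m' ∧ ∀ p : ℕ, p.Prime → p ∣ M → (p ∣ m ↔ (p : ℤ) ∣ u)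

namespace IsSplitAlong

variable {u : ℤ} {M m m' p : ℕ}

lemma dvd_left (h : IsSplitAlong u M m m') : m ∣ M := ⟨m', h.1.symm⟩

lemma dvd_right (h : IsSplitAlong u M m m') : m' ∣ M := ⟨m, by rw [← h.1, mul_comm]⟩

lemma prime_dvd_left_iff (h : IsSplitAlong u M m m') (hp : p.Prime) (hpM : p ∣ M) :
    p ∣ m ↔ (p : ℤ) ∣ u :=
  h.2.2 p hp hpM

lemma prime_dvd_right_iff (h : IsSplitAlong u M m m') (hp : p.Prime) (hpM : p ∣ M) :
    p ∣ m' ↔ ¬ (p : ℤ) ∣ u := by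
  rw [← h.prime_dvd_left_iff hp hpM]
  refine ⟨fun hm' hm => hp.not_dvd_one (h.2.1 ▸ Nat.dvd_gcd hm hm'), fun hm => ?_⟩
  exact ((hp.dvd_mul).mp (h.1 ▸ hpM)).resolve_left hm

lemma isCoprime_right (h : IsSplitAlong u M m m') : IsCoprime u m' :=
  Int.isCoprime_natCast_of_forall_prime_dvd fun _ hp hu hm' =>
    (h.prime_dvd_right_iff hp (hm'.trans h.dvd_right)).mp hm' hu

lemma isCoprime_left {v : ℤ} (h : IsSplitAlong u M m m') (huv : Int.gcd (Int.gcd u v) M = 1) :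
    IsCoprime v m :=
  Int.isCoprime_natCast_of_forall_prime_dvd fun p hp hv hm => by
    have hpM := hm.trans h.dvd_left
    have hpu := (h.prime_dvd_left_iff hp hpM).mp hm
    exact (Int.isCoprime_iff_gcd_eq_one.mpr huv).not_prime_dvd hp
      (Int.dvd_coe_gcd hpu hv) hpM

variable {M' m₁ m₁' : ℕ}

lemma prime_dvd_left_of_dvd (h : IsSplitAlong u M m m') (h' : IsSplitAlong u M' m₁ m₁')
    (hM : M' ∣ M) (hp : p.Prime) (hp₁ : p ∣ m₁) : p ∣ m :=
  have hpM' := hp₁.trans h'.dvd_left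
  (h.prime_dvd_left_iff hp (hpM'.trans hM)).mpr ((h'.prime_dvd_left_iff hp hpM').mp hp₁)

lemma prime_dvd_right_of_dvd (h : IsSplitAlong u M m m') (h' : IsSplitAlong u M' m₁ m₁')
    (hM : M' ∣ M) (hp : p.Prime) (hp₁ : p ∣ m₁') : p ∣ m' :=
  have hpM' := hp₁.trans h'.dvd_right
  (h.prime_dvd_right_iff hp (hpM'.trans hM)).mpr ((h'.prime_dvd_right_iff hp hpM').mp hp₁)

lemma dvd_mul_of_dvd_mul {x : ℤ} (h : IsSplitAlong u M m m') (h' : IsSplitAlong u M' m₁ m₁')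
    (hM : M' ∣ M)     (hx : (M : ℤ) ∣ M' * x) : (m : ℤ) ∣ m₁ * x ∧ (m' : ℤ) ∣ m₁' * x := by
  have hcop : IsCoprime (m : ℤ) m' := Nat.isCoprime_iff_coprime.mpr h.2.1
  have hM' : (M' : ℤ) = m₁ * m₁' := by exact_mod_cast h'.1.symm
  have hx₁ : (M : ℤ) ∣ m₁' * (m₁ * x) := by convert hx using 1; rw [hM']; ring
  have hx₂ : (M : ℤ) ∣ m₁ * (m₁' * x) := by convert hx using 1; rw [hM']; ring
  exact ⟨(hcop.of_forall_prime_dvd_imp fun p hp => h.prime_dvd_right_of_dvd h' hM hp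
      ).dvd_of_dvd_mul_left ((Int.natCast_dvd_natCast.mpr h.dvd_left).trans hx₁),
    (hcop.symm.of_forall_prime_dvd_imp fun p hp => h.prime_dvd_left_of_dvd h' hM hp
      ).dvd_of_dvd_mul_left ((Int.natCast_dvd_natCast.mpr h.dvd_right).trans hx₂)⟩

end IsSplitAlong

lemma addOrderOf_intCast_dvd (N : ℕ) (x : ℤ) : addOrderOf (x : ZMod N) ∣ N :=
  addOrderOf_dvd_of_nsmul_eq_zero (ZModModule.char_nsmul_eq_zero N _)

lemma dvd_addOrderOf_intCast_mul (N : ℕ) (x : ℤ) : (N : ℤ) ∣ addOrderOf (x : ZMod N) * x := by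
  rw [← ZMod.intCast_zmod_eq_zero_iff_dvd, Int.cast_mul, Int.cast_natCast, ← nsmul_eq_mul,
    addOrderOf_nsmul_eq_zero]

/-- `[[0,-1],[N,n]]·[[A,B],[C,D]]·diag(N a', a)⁻¹` for `N = a b`, `N' = a' b'`, `A = a a' α`,
`B = b b' β`, `C = N N' γ`, `D = a a' δ` (see `merelRep_mul_diagonal`). -/
def merelRep (a b a' b' n α β γ δ : ℤ) : Matrix (Fin 2) (Fin 2) ℤ :=
  !![-(b' * γ), -(a' * δ); a * α + n * (b' * γ), b ^ 2 * b' * β + n * (a' * δ)]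

section merelRep

variable {a b a' b' n α β γ δ : ℤ}

lemma merelRep_det (h : a * a' * α * δ - (b * b') ^ 2 * β * γ = 1) :
    (merelRep a b a' b' n α β γ δ).det = 1 := by
  rw [merelRep, Matrix.det_fin_two_of]
  linear_combination h

lemma merelRep_mul_diagonal {N N' : ℤ} (hN : N = a * b) (hN' : N' = a' * b') :
    merelRep a b a' b' n α β γ δ * !![N * a', 0; 0, a] =
      !![0, -1; N, n] * !![a * a' * α, b * b' * β; N * N' * γ, a * a' * δ] := by
  subst hN hN'
  ext i j
  fin_cases i <;> fin_cases j <;> simp [merelRep] <;> ring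

end merelRep

section
variable {a b a' b' : ℕ} {u v n α β γ δ : ℤ}

lemma merelRep_bottom_modEq_left (hbez : a * a' * α * δ - ((b : ℤ) * b') ^ 2 * β * γ = 1)
    (hβ : (b : ℤ) ^ 2 * b' * β ≡ v [ZMOD a]) (hn : n ≡ -(u * v) [ZMOD a])
    (huv : (a : ℤ) ∣ a' * (u * v)) :
    merelRep a b a' b' n α β γ δ 1 0 ≡ u [ZMOD a] ∧
      merelRep a b a' b' n α β γ δ 1 1 ≡ v [ZMOD a] := by
  simp only [merelRep, Matrix.of_apply, Matrix.cons_val', Matrix.cons_val_one, Matrix.cons_val_zero,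
    Matrix.empty_val', Matrix.cons_val_fin_one]
  simp only [← ZMod.intCast_eq_intCast_iff] at hβ hn ⊢
  rw [← ZMod.intCast_zmod_eq_zero_iff_dvd] at huv
  have hbez' := congrArg (fun x : ℤ => (x : ZMod a)) hbez
  have ha : ((a : ℤ) : ZMod a) = 0 := by simp
  push_cast at hβ hn huv hbez' ha ⊢
  constructor
  · linear_combination (α - u * a' * α * δ) * ha + b' * γ * hn + u * b' * γ * hβ + u * hbez'
  · linear_combination hβ + a' * δ * hn - δ * huv

lemma merelRep_bottom_modEq_right (hbez : a * a' * α * δ - ((b : ℤ) * b') ^ 2 * β * γ = 1)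
    (hα : a * α ≡ u [ZMOD b]) (hn : n ≡ u * v [ZMOD b]) (huv : (b : ℤ) ∣ b' * (u * v)) :
    merelRep a b a' b' n α β γ δ 1 0 ≡ u [ZMOD b] ∧
      merelRep a b a' b' n α β γ δ 1 1 ≡ v [ZMOD b] := by
  simp only [merelRep, Matrix.of_apply, Matrix.cons_val', Matrix.cons_val_one, Matrix.cons_val_zero,
    Matrix.empty_val', Matrix.cons_val_fin_one]
  simp only [← ZMod.intCast_eq_intCast_iff] at hα hn ⊢
  rw [← ZMod.intCast_zmod_eq_zero_iff_dvd] at huv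
  have hbez' := congrArg (fun x : ℤ => (x : ZMod b)) hbez
  have hb : ((b : ℤ) : ZMod b) = 0 := by simp
  push_cast at hα hn huv hbez' hb ⊢
  constructor
  · linear_combination hα + b' * γ * hn + γ * huv
  · linear_combination (b * b' * β + v * b * b' ^ 2 * β * γ) * hb + a' * δ * hn
      - v * a' * δ * hα + v * hbez'

lemma merelRep_bottom_modEq (hab : a.Coprime b)
    (hbez : a * a' * α * δ - ((b : ℤ) * b') ^ 2 * β * γ = 1)
    (hα : a * α ≡ u [ZMOD b]) (hβ : (b : ℤ) ^ 2 * b' * β ≡ v [ZMOD a])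
    (hna : n ≡ -(u * v) [ZMOD a]) (hnb : n ≡ u * v [ZMOD b])
    (hua : (a : ℤ) ∣ a' * (u * v)) (hub : (b : ℤ) ∣ b' * (u * v)) :
    merelRep a b a' b' n α β γ δ 1 0 ≡ u [ZMOD a * b] ∧
      merelRep a b a' b' n α β γ δ 1 1 ≡ v [ZMOD a * b] := by
  obtain ⟨hla, hra⟩ := merelRep_bottom_modEq_left hbez hβ hna hua
  obtain ⟨hlb, hrb⟩ := merelRep_bottom_modEq_right hbez hα hnb hub
  exact ⟨(Int.modEq_and_modEq_iff_modEq_mul (m := a) (n := b) hab).mp ⟨hla, hlb⟩,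
    (Int.modEq_and_modEq_iff_modEq_mul (m := a) (n := b) hab).mp ⟨hra, hrb⟩⟩

end

lemma exists_gamma1_mul_eq {N : ℕ} {g R : Matrix (Fin 2) (Fin 2) ℤ} (hg : g.det = 1)
    (hR : R.det = 1) (h10 : g 1 0 ≡ R 1 0 [ZMOD N]) (h11 : g 1 1 ≡ R 1 1 [ZMOD N]) :
    ∃ γ : Matrix (Fin 2) (Fin 2) ℤ, γ.det = 1 ∧ (N : ℤ) ∣ γ 1 0 ∧
      γ 0 0 ≡ 1 [ZMOD N] ∧ γ 1 1 ≡ 1 [ZMOD N] ∧ g = γ * R := by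
  set γ := g * R.adjugate with hγ
  have hγ10 : γ 1 0 = g 1 0 * R 1 1 - g 1 1 * R 1 0 := by
    simp only [hγ, Matrix.adjugate_fin_two, Matrix.mul_apply, Fin.sum_univ_two, Matrix.of_apply,
      Matrix.cons_val', Matrix.cons_val_zero, Matrix.cons_val_one, Matrix.cons_val_fin_one]
    ring
  have hγ11 : γ 1 1 = g 1 1 * R 0 0 - g 1 0 * R 0 1 := by
    simp only [hγ, Matrix.adjugate_fin_two, Matrix.mul_apply, Fin.sum_univ_two, Matrix.of_apply,
      Matrix.cons_val', Matrix.cons_val_zero, Matrix.cons_val_one, Matrix.cons_val_fin_one]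
    ring
  have hdet : γ.det = 1 := by rw [Matrix.det_mul, Matrix.det_adjugate, hg, hR, one_pow, one_mul]
  rw [Matrix.det_fin_two] at hR hdet
  rw [← ZMod.intCast_eq_intCast_iff] at h10 h11
  have e10 : (γ 1 0 : ZMod N) = 0 := by
    rw [hγ10]; push_cast; rw [h10, h11]; ring
  have e11 : (γ 1 1 : ZMod N) = 1 := by
    rw [hγ11, ← Int.cast_one, ← hR]; push_cast; rw [h10, h11]; ring
  have e00 : (γ 0 0 : ZMod N) = 1 := by
    have hdet' := congrArg (Int.cast : ℤ → ZMod N) hdet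
    push_cast at hdet'
    linear_combination hdet' + (γ 0 1 : ZMod N) * e10 - (γ 0 0 : ZMod N) * e11
  refine ⟨γ, Matrix.det_fin_two γ ▸ hdet, (ZMod.intCast_zmod_eq_zero_iff_dvd _ _).mp e10,
    (ZMod.intCast_eq_intCast_iff _ _ _).mp (by simpa using e00),
    (ZMod.intCast_eq_intCast_iff _ _ _).mp (by simpa using e11), ?_⟩
  rw [hγ, Matrix.mul_assoc, Matrix.adjugate_mul, Matrix.det_fin_two, hR, one_smul, Matrix.mul_one]

theorem merel_coset_representatives_general
    (N : ℕ) (u v : ℤ) (hcop : Int.gcd (Int.gcd u v) (N : ℤ) = 1)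
    (Ns Nsb : ℕ) (hNfact : Ns * Nsb = N) (hcopS : Nat.Coprime Ns Nsb)
    (hSchar : ∀ p : ℕ, p.Prime → p ∣ N → ((p ∣ Ns) ↔ (p : ℤ) ∣ u))
    (N' : ℕ) (hN' : N' = addOrderOf ((u * v : ℤ) : ZMod N))
    (N's N'sb : ℕ) (hN'fact : N's * N'sb = N') (hcopS' : Nat.Coprime N's N'sb)
    (hS'char : ∀ p : ℕ, p.Prime → p ∣ N' → ((p ∣ N's) ↔ (p : ℤ) ∣ u))
    (n : ℤ) (hn1 : n ≡ u * v [ZMOD (Nsb : ℤ)]) (hn2 : n ≡ -(u * v) [ZMOD (Ns : ℤ)]) :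
    ∃ A B C D : ℤ,
      A * D - B * C = (Ns : ℤ) * (N's : ℤ) ∧
      A ≡ u * (N's : ℤ) [ZMOD (Nsb : ℤ)] ∧
      (Nsb : ℤ) * B ≡ v [ZMOD (Ns : ℤ)] ∧
      ((Ns : ℤ) * (N's : ℤ)) ∣ A ∧ ((Ns : ℤ) * (N's : ℤ)) ∣ D ∧
      ((N : ℤ) * (N' : ℤ)) ∣ C ∧ ((Nsb : ℤ) * (N'sb : ℤ)) ∣ B ∧
      ∀ g : Matrix.SpecialLinearGroup (Fin 2) ℤ,
        ((g : Matrix (Fin 2) (Fin 2) ℤ) 1 0) ≡ u [ZMOD (N : ℤ)] →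
        ((g : Matrix (Fin 2) (Fin 2) ℤ) 1 1) ≡ v [ZMOD (N : ℤ)] →
        ∃ γ : Matrix (Fin 2) (Fin 2) ℤ,
          γ.det = 1 ∧ (N : ℤ) ∣ γ 1 0 ∧
          γ 0 0 ≡ 1 [ZMOD (N : ℤ)] ∧ γ 1 1 ≡ 1 [ZMOD (N : ℤ)] ∧
          (g : Matrix (Fin 2) (Fin 2) ℤ) * !![(N : ℤ) * (N's : ℤ), 0; 0, (Ns : ℤ)]
            = γ * !![0, -1; (N : ℤ), n] * !![A, B; C, D] := by
  have hS : IsSplitAlong u N Ns Nsb := ⟨hNfact, hcopS, hSchar⟩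
  have hS' : IsSplitAlong u N' N's N'sb := ⟨hN'fact, hcopS', hS'char⟩
  have hN'N : N' ∣ N := hN' ▸ addOrderOf_intCast_dvd N _
  obtain ⟨α, β, γ, δ, hbez, hα, hβ⟩ := exists_merel_coefficients hcopS hS.isCoprime_right
    (hS.isCoprime_left hcop) (fun _ => hS.prime_dvd_left_of_dvd hS' hN'N)
    (fun _ => hS.prime_dvd_right_of_dvd hS' hN'N)
  obtain ⟨hNs, hNsb⟩ :=
    hS.dvd_mul_of_dvd_mul hS' hN'N (hN' ▸ dvd_addOrderOf_intCast_mul N (u * v))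
  have hNZ : (N : ℤ) = Ns * Nsb := by exact_mod_cast hNfact.symm
  have hN'Z : (N' : ℤ) = N's * N'sb := by exact_mod_cast hN'fact.symm
  refine ⟨Ns * N's * α, Nsb * N'sb * β, N * N' * γ, Ns * N's * δ, ?_, ?_, ?_, dvd_mul_right _ _,
    dvd_mul_right _ _, dvd_mul_right _ _, dvd_mul_right _ _, fun g hgu hgv => ?_⟩
  · rw [hNZ, hN'Z]; linear_combination (Ns * N's : ℤ) * hbez
  · convert hα.mul_right (N's : ℤ) using 1; ring
  · convert hβ using 1; ring
  obtain ⟨hR10, hR11⟩ := merelRep_bottom_modEq hcopS hbez hα hβ hn2 hn1 hNs hNsb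
  rw [← hNZ] at hR10 hR11
  obtain ⟨γ₁, hdet, h10, h00, h11, hgR⟩ := exists_gamma1_mul_eq g.det_coe (merelRep_det hbez)
    (hgu.trans hR10.symm) (hgv.trans hR11.symm)
  refine ⟨γ₁, hdet, h10, h00, h11, ?_⟩
  rw [hgR, Matrix.mul_assoc, merelRep_mul_diagonal hNZ hN'Z, Matrix.mul_assoc]

/-- Merel's coset representatives, Lemma 3.1 of the paper.
Let `(u,v)` have `gcd(u,v,N) = 1`, let `Ns = N_S` (resp. `N's = N'_S`) be the part of
`N` (resp. of `N'`, the additive order of `uv` in `ℤ/N`) supported on the primes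
dividing both `N` and `u`, with complements `Nsb = N_{S̄}`, `N'sb = N'_{S̄}`.
Choose `n ≡ uv mod N_{S̄}`, `n ≡ −uv mod N_S`.  Then there exist integers `A,B,C,D`
with `AD − BC = N_S N'_S`, `A ≡ u N'_S mod N_{S̄}`, `B ≡ v/N_{S̄} mod N_S`
(encoded as `N_{S̄}·B ≡ v mod N_S`), `N_S N'_S ∣ A`, `N_S N'_S ∣ D`, `N N' ∣ C`,
`N_{S̄} N'_{S̄} ∣ B`, such that for every `g ∈ SL₂(ℤ)` with bottom row `≡ (u,v) mod N`,
`Γ₁(N) g = Γ₁(N)·[[0,−1],[N,0]]·[[1,n/N],[0,1]]·[[A,B],[C,D]]·[[N N'_S,0],[0,N_S]]⁻¹`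
(the coset equality being expressed by an element `γ ∈ Γ₁(N)` after clearing the
denominators: `[[0,−1],[N,0]]·[[1,n/N],[0,1]] = [[0,−1],[N,n]]`). -/
theorem merel_coset_representatives
    (N : ℕ) (hN : 0 < N) (u v : ℤ) (hcop : Int.gcd (Int.gcd u v) (N : ℤ) = 1)
    (Ns Nsb : ℕ) (hNfact : Ns * Nsb = N) (hcopS : Nat.Coprime Ns Nsb)
    (hSchar : ∀ p : ℕ, p.Prime → p ∣ N → ((p ∣ Ns) ↔ (p : ℤ) ∣ u))
    (N' : ℕ) (hN' : N' = addOrderOf ((u * v : ℤ) : ZMod N))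
    (N's N'sb : ℕ) (hN'fact : N's * N'sb = N') (hcopS' : Nat.Coprime N's N'sb)
    (hS'char : ∀ p : ℕ, p.Prime → p ∣ N' → ((p ∣ N's) ↔ (p : ℤ) ∣ u))
    (n : ℤ) (hn1 : n ≡ u * v [ZMOD (Nsb : ℤ)]) (hn2 : n ≡ -(u * v) [ZMOD (Ns : ℤ)]) :
    ∃ A B C D : ℤ,
      A * D - B * C = (Ns : ℤ) * (N's : ℤ) ∧
      A ≡ u * (N's : ℤ) [ZMOD (Nsb : ℤ)] ∧
      (Nsb : ℤ) * B ≡ v [ZMOD (Ns : ℤ)] ∧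
      ((Ns : ℤ) * (N's : ℤ)) ∣ A ∧ ((Ns : ℤ) * (N's : ℤ)) ∣ D ∧
      ((N : ℤ) * (N' : ℤ)) ∣ C ∧ ((Nsb : ℤ) * (N'sb : ℤ)) ∣ B ∧
      ∀ g : Matrix.SpecialLinearGroup (Fin 2) ℤ,
        ((g : Matrix (Fin 2) (Fin 2) ℤ) 1 0) ≡ u [ZMOD (N : ℤ)] →
        ((g : Matrix (Fin 2) (Fin 2) ℤ) 1 1) ≡ v [ZMOD (N : ℤ)] →
        ∃ γ : Matrix (Fin 2) (Fin 2) ℤ,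
          γ.det = 1 ∧ (N : ℤ) ∣ γ 1 0 ∧
          γ 0 0 ≡ 1 [ZMOD (N : ℤ)] ∧ γ 1 1 ≡ 1 [ZMOD (N : ℤ)] ∧
          (g : Matrix (Fin 2) (Fin 2) ℤ) * !![(N : ℤ) * (N's : ℤ), 0; 0, (Ns : ℤ)]
            = γ * !![0, -1; (N : ℤ), n] * !![A, B; C, D] :=
  merel_coset_representatives_general N u v hcop Ns Nsb hNfact hcopS hSchar N' hN' N's N'sb hN'fact
    hcopS' hS'char n hn1 hn2
end

section
/- Let M, d be positive integers, S a set of primes dividing dM, and write S_M = S ∩ {p : p | M}, d_S = ∏_{p∈S} p^{v_p(d)}, M_S = ∏_{p∈S_M} p^{v_p(M)}. Choose x,y,z,w ∈ Z with y ≡ 1 mod d_S M_S, x ≡ 1 mod (dM)/(d_S M_S), and (M_S d_S)^2 x w − M d z y = M_S d_S. Then the matrix identity [[d,0],[0,1]] · [[d_S M_S x, y],[M d z, d_S M_S w]] = [[M_S d_S x, d_{S̄} y],[M z, M_S w]] · [[d, 0],[0, d_S]] holds, where d_{S̄} = d/d_S, and the matrix [[M_S d_S x, d_{S̄} y],[M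 z, M_S w]] is an integer matrix of determinant M_S whose entries satisfy d_{S̄} y ≡ d_{S̄} mod M_S and d_S x ≡ d_S mod M/M_S. -/
/-- The matrix computation behind swapping lifting and Atkin–Lehner
operators (`F|B_d|W_S^{Md} = conj(χ_S)(d_{S̄}) conj(χ_{S̄})(d_S) F|W_{S_M}^M|B_{d_{S̄}}`):
with `y ≡ 1 mod d_S M_S`, `x ≡ 1 mod (dM)/(d_S M_S)` and
`(M_S d_S)² x w − M d z y = M_S d_S`, one has the identity
`[[d,0],[0,1]]·[[d_S M_S x, y],[M d z, d_S M_S w]]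
  = [[M_S d_S x, d_{S̄} y],[M z, M_S w]]·[[d,0],[0,d_S]]`,
the matrix `[[M_S d_S x, d_{S̄} y],[M z, M_S w]]` has determinant `M_S`, and
`d_{S̄} y ≡ d_{S̄} mod M_S`, `d_S x ≡ d_S mod M/M_S`. -/
theorem lift_atkin_lehner_swap_matrix
    (M d MS dS : ℕ) (hM : 0 < M) (hd : 0 < d) (hMS : 0 < MS) (hdS : 0 < dS)
    (hMSdvd : MS ∣ M) (hdSdvd : dS ∣ d)
    (hcopM : Nat.Coprime MS (M / MS)) (hcopd : Nat.Coprime dS (d / dS))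
    (hcop : Nat.Coprime (dS * MS) ((d * M) / (dS * MS)))
    (x y z w : ℤ)
    (hy : y ≡ 1 [ZMOD ((dS * MS : ℕ) : ℤ)])
    (hx : x ≡ 1 [ZMOD (((d * M) / (dS * MS) : ℕ) : ℤ)])
    (hdet : ((MS : ℤ) * (dS : ℤ)) ^ 2 * x * w - (M : ℤ) * (d : ℤ) * z * y
      = (MS : ℤ) * (dS : ℤ)) :
    (!![(d : ℤ), 0; 0, 1] * !![(dS : ℤ) * (MS : ℤ) * x, y;
          (M : ℤ) * (d : ℤ) * z, (dS : ℤ) * (MS : ℤ) * w]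
        = !![(MS : ℤ) * (dS : ℤ) * x, ((d / dS : ℕ) : ℤ) * y;
              (M : ℤ) * z, (MS : ℤ) * w] * !![(d : ℤ), 0; 0, (dS : ℤ)]) ∧
      (!![(MS : ℤ) * (dS : ℤ) * x, ((d / dS : ℕ) : ℤ) * y;
          (M : ℤ) * z, (MS : ℤ) * w]).det = (MS : ℤ) ∧
      ((d / dS : ℕ) : ℤ) * y ≡ ((d / dS : ℕ) : ℤ) [ZMOD ((MS : ℕ) : ℤ)] ∧
      (dS : ℤ) * x ≡ (dS : ℤ) [ZMOD (((M / MS : ℕ)) : ℤ)] := by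

  obtain ⟨d2, rfl⟩ := hdSdvd
  obtain ⟨M2, rfl⟩ := hMSdvd
  have e1 : dS * d2 / dS = d2 := Nat.mul_div_cancel_left d2 hdS
  have e2 : MS * M2 / MS = M2 := Nat.mul_div_cancel_left M2 hMS
  have e3 : dS * d2 * (MS * M2) / (dS * MS) = d2 * M2 := by
    rw [show dS * d2 * (MS * M2) = dS * MS * (d2 * M2) by ring,
      Nat.mul_div_cancel_left _ (Nat.mul_pos hdS hMS)]
  rw [e1, e2, e3] at *
  push_cast at hdet ⊢
  refine ⟨?_, ?_, ?_, ?_⟩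
  · rw [Matrix.mul_fin_two, Matrix.mul_fin_two]
    ext i j
    fin_cases i <;> fin_cases j <;> simp <;> ring
  · rw [Matrix.det_fin_two_of]
    have hdS0 : (dS : ℤ) ≠ 0 := by exact_mod_cast hdS.ne'
    apply mul_left_cancel₀ hdS0
    linear_combination hdet
  · have := hy.of_dvd (Int.natCast_dvd_natCast.mpr (dvd_mul_left MS dS))
    exact (this.mul_left _).trans (by rw [mul_one])
  · have e3' : dS * d2 * (MS * M2) / (dS * MS) = d2 * M2 := by
      rw [show dS * d2 * (MS * M2) = dS * MS * (d2 * M2) by ring,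
        Nat.mul_div_cancel_left _ (Nat.mul_pos hdS hMS)]
    rw [e3'] at hx
    have := hx.of_dvd (Int.natCast_dvd_natCast.mpr (dvd_mul_left M2 d2))
    exact (this.mul_left _).trans (by rw [mul_one])
end

section
/- Let N, M be positive integers with M | N such that gcd(M, N/N_M) = 1, where N_M = ∏_{p | M} p^{v_p(N)}. Let α be a Dirichlet character modulo M and let α_N be the character modulo N it induces. Then for every integer n ≥ 1 and every integer l ≥ 0, σ_{l, 1, conj(α_N)}(n) = ∑_{e | gcd(n, N/N_M)} μ(e) conj(α)(e) e^{l} · σ_{l, 1, conj(α)}(n/e), where σ_{l,1,χ}(n) = ∑_{d | n} χ(d) d^{l} and μ is the Möbius function. -/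
open Finset

/-! Since every prime factor of `N_M` divides `M`, where `α` already vanishes, the induced
character satisfies `α_N(d) = α(d) · [gcd(d, N/N_M) = 1]`. Detecting the coprimality condition by
`∑_{e ∣ gcd(d, N/N_M)} μ(e)`, swapping the two divisor sums and writing `d = e d'` with `α`
completely multiplicative gives the formula. -/

namespace Nat

lemma Coprime.of_forall_prime_dvd {d K M : ℕ} (hKM : ∀ p, p.Prime → p ∣ K → p ∣ M)
    (hdM : d.Coprime M) : d.Coprime K :=
  coprime_of_dvd fun p hp hpd hpK =>
    hp.not_dvd_one (hdM.gcd_eq_one ▸ dvd_gcd hpd (hKM p hp hpK))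

lemma coprime_iff_coprime_div_of_forall_prime_dvd {d N K M : ℕ} (hKN : K ∣ N)
    (hKM : ∀ p, p.Prime → p ∣ K → p ∣ M) (hdM : d.Coprime M) :
    d.Coprime N ↔ d.Coprime (N / K) := by
  conv_lhs => rw [← Nat.mul_div_cancel' hKN]
  rw [coprime_mul_iff_right, and_iff_right (hdM.of_forall_prime_dvd hKM)]

lemma sum_divisors_filter_dvd {A : Type*} [AddCommMonoid A] {n e : ℕ} (hn : n ≠ 0)
    (hen : e ∣ n) (g : ℕ → A) :
    ∑ d ∈ n.divisors with e ∣ d, g d = ∑ d ∈ (n / e).divisors, g (e * d) := by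
  have he : e ≠ 0 := ne_zero_of_dvd_ne_zero hn hen
  have hne : n / e ≠ 0 := (div_ne_zero_iff_of_dvd hen).mpr ⟨hn, he⟩
  have himage : (n / e).divisors.image (e * ·) = {d ∈ n.divisors | e ∣ d} := by
    ext d
    simp only [mem_image, mem_filter, mem_divisors]
    constructor
    · rintro ⟨d, ⟨hd, -⟩, rfl⟩
      exact ⟨⟨by simpa [Nat.mul_div_cancel' hen] using mul_dvd_mul_left e hd, hn⟩,
        dvd_mul_right e d⟩
    · rintro ⟨⟨hdn, -⟩, d, rfl⟩
      exact ⟨d, ⟨dvd_div_of_mul_dvd hdn, hne⟩, rfl⟩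
  rw [← himage, sum_image fun a _ b _ h => mul_left_cancel₀ he h]

end Nat

namespace ArithmeticFunction

lemma sum_divisors_moebius {R : Type*} [Ring R] (n : ℕ) :
    ∑ d ∈ n.divisors, (moebius d : R) = if n = 1 then 1 else 0 := by
  have h := congrArg (fun f : ArithmeticFunction R => f n) (coe_moebius_mul_coe_zeta (R := R))
  simpa only [coe_mul_zeta_apply, intCoe_apply, one_apply] using h

lemma sum_divisors_ite_coprime {R : Type*} [Ring R] {n : ℕ} (hn : n ≠ 0) (Q : ℕ) (g : ℕ → R) :
    ∑ d ∈ n.divisors, (if d.Coprime Q then g d else 0)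
      = ∑ e ∈ (n.gcd Q).divisors, (moebius e : R) * ∑ d ∈ (n / e).divisors, g (e * d) := by
  calc ∑ d ∈ n.divisors, (if d.Coprime Q then g d else 0)
      = ∑ d ∈ n.divisors, ∑ e ∈ (d.gcd Q).divisors, (moebius e : R) * g d := by
        refine sum_congr rfl fun d _ => ?_
        simp only [← sum_mul, sum_divisors_moebius, ite_mul, one_mul, zero_mul, Nat.Coprime]
    _ = ∑ e ∈ (n.gcd Q).divisors, ∑ d ∈ n.divisors with e ∣ d, (moebius e : R) * g d := by
        refine sum_comm' fun d e => ?_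
        have hd : d ∣ n → d ≠ 0 := fun h => ne_zero_of_dvd_ne_zero hn h
        simp only [mem_filter, Nat.mem_divisors, Nat.dvd_gcd_iff, ne_eq, Nat.gcd_eq_zero_iff]
        grind [Nat.dvd_trans]
    _ = _ := by
        refine sum_congr rfl fun e he => ?_
        have hen : e ∣ n := (Nat.dvd_of_mem_divisors he).trans (Nat.gcd_dvd_left n Q)
        rw [Nat.sum_divisors_filter_dvd hn hen, mul_sum]

end ArithmeticFunction

namespace DirichletCharacter

variable {R : Type*} [CommMonoidWithZero R] {M N : ℕ}

lemma changeLevel_natCast (hMN : M ∣ N) (χ : DirichletCharacter R M) (d : ℕ) :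
    changeLevel hMN χ d = if d.Coprime N then χ d else 0 := by
  split_ifs with hdN
  · simpa [ZMod.coe_unitOfCoprime, ZMod.cast_natCast hMN] using
      changeLevel_eq_cast_of_dvd χ hMN (ZMod.unitOfCoprime d hdN)
  · exact MulChar.map_nonunit _ (by rwa [ZMod.isUnit_iff_coprime])

lemma changeLevel_natCast_eq_ite_coprime_div {K : ℕ} (hMN : M ∣ N) (hKN : K ∣ N)
    (hKM : ∀ p, p.Prime → p ∣ K → p ∣ M) (χ : DirichletCharacter R M) (d : ℕ) :
    changeLevel hMN χ d = if d.Coprime (N / K) then χ d else 0 := by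
  by_cases hdM : d.Coprime M
  · exact (changeLevel_natCast hMN χ d).trans
      (if_congr (Nat.coprime_iff_coprime_div_of_forall_prime_dvd hKN hKM hdM) rfl rfl)
  · have hχ : χ d = 0 := MulChar.map_nonunit _ (by rwa [ZMod.isUnit_iff_coprime])
    rw [changeLevel_natCast, hχ, ite_self, ite_self]

end DirichletCharacter

theorem eisenstein_decomposition_coefficients_general
    (N M NM : ℕ) (hMdvd : M ∣ N)
    (hNMdvd : NM ∣ N)
    (hprimes : ∀ p : ℕ, p.Prime → (p ∣ NM ↔ p ∣ M))
    (α : DirichletCharacter ℂ M) :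
    ∀ n : ℕ, 1 ≤ n → ∀ l : ℕ,
      (∑ d ∈ Nat.divisors n,
          (starRingEnd ℂ) ((DirichletCharacter.changeLevel hMdvd α) ((d : ℕ) : ZMod N))
            * (d : ℂ) ^ l)
        = ∑ e ∈ Nat.divisors (Nat.gcd n (N / NM)),
            ((ArithmeticFunction.moebius e : ℤ) : ℂ) *
              (starRingEnd ℂ) (α ((e : ℕ) : ZMod M)) * (e : ℂ) ^ l *
              (∑ d ∈ Nat.divisors (n / e),
                (starRingEnd ℂ) (α ((d : ℕ) : ZMod M)) * (d : ℂ) ^ l) := by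
  intro n hn l
  have hχ (d : ℕ) := DirichletCharacter.changeLevel_natCast_eq_ite_coprime_div hMdvd hNMdvd
    (fun p hp => (hprimes p hp).mp) α d
  simp only [hχ, apply_ite (starRingEnd ℂ), map_zero, ite_mul, zero_mul]
  rw [ArithmeticFunction.sum_divisors_ite_coprime (by omega)]
  refine Finset.sum_congr rfl fun e _ => ?_
  rw [mul_sum, mul_sum]
  refine Finset.sum_congr rfl fun d _ => ?_
  push_cast
  rw [map_mul, map_mul]
  ring

/-- coefficient form of Lemma 5.1: with `N_M` the `M`-part of `N`
(same prime support as `M`, `N_M ∣ N`, `gcd(N_M, N/N_M) = 1`, and `gcd(M, N/N_M) = 1`),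
for the character `α_N` mod `N` induced by `α` mod `M`, every `n ≥ 1` and `l ≥ 0`
satisfy `σ_{l,1,conj(α_N)}(n) = ∑_{e ∣ gcd(n, N/N_M)} μ(e) conj(α)(e) e^l ·
σ_{l,1,conj(α)}(n/e)`, where `σ_{l,1,χ}(n) = ∑_{d∣n} χ(d) d^l`. -/
theorem eisenstein_decomposition_coefficients
    (N M NM : ℕ) (hN : 0 < N) (hM : 0 < M) (hMdvd : M ∣ N)
    (hMNM : M ∣ NM) (hNMdvd : NM ∣ N)
    (hprimes : ∀ p : ℕ, p.Prime → (p ∣ NM ↔ p ∣ M))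
    (hcop : Nat.Coprime NM (N / NM)) (hcop' : Nat.Coprime M (N / NM))
    (α : DirichletCharacter ℂ M) :
    ∀ n : ℕ, 1 ≤ n → ∀ l : ℕ,
      (∑ d ∈ Nat.divisors n,
          (starRingEnd ℂ) ((DirichletCharacter.changeLevel hMdvd α) ((d : ℕ) : ZMod N))
            * (d : ℂ) ^ l)
        = ∑ e ∈ Nat.divisors (Nat.gcd n (N / NM)),
            ((ArithmeticFunction.moebius e : ℤ) : ℂ) *
              (starRingEnd ℂ) (α ((e : ℕ) : ZMod M)) * (e : ℂ) ^ l *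
              (∑ d ∈ Nat.divisors (n / e),
                (starRingEnd ℂ) (α ((d : ℕ) : ZMod M)) * (d : ℂ) ^ l) :=
  eisenstein_decomposition_coefficients_general N M NM hMdvd hNMdvd hprimes α
end

section
/- Let N ∈ N, k ≥ 2, f ∈ S_k(Γ_1(N)) a cusp form, and for g ∈ SL_2(Z) define ξ_f(j; g) = ∫_{g·0}^{g·∞} f(z) (g·P_j)(z,1) dz where P_j(X,Y) = X^j Y^{k−2−j} and (g·P)(X,Y) = P(g^{−1}(X,Y)^T). If g = [[a,b],[c,d]] ∈ SL_2(Z) with bottom row (c,d) ≡ (u,v) mod N, then ξ_f(j; g) = (j! / (−2πi)^{j+1}) · L(f|_k g, j+1), where L(F, s) is the analytic continuation of ∑_{n ∈ Q_{>0}} b_n n^{−s} for F = ∑ b_n e^{2πinτ}. -/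
open Complex MeasureTheory

/-!
Along the path `z' = g·(iy)` one has `dz' − b = iy/(ciy+d)`, `−cz' + a = 1/(ciy+d)` and
`dz' = i dy/(ciy+d)²`, so the integrand of `ξ_f(j; g)` is `i^{j+1} (f|_k g)(iy) y^j`.
Hence `ξ_f(j; g)` is `i^{j+1}` times the Mellin transform of `f|_k g` at `s = j+1`, that is
`i^{j+1} j! (2π)^{-(j+1)} L(f|_k g, j+1)`, and `i/(2π) = 1/(−2πi)`.
-/

section Mobius
variable {K : Type*} [Field K] {a b c d z : K}

theorem mul_mobius_sub_eq_div (hdet : a * d - b * c = 1) (hw : c * z + d ≠ 0) :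
    d * ((a * z + b) / (c * z + d)) - b = z / (c * z + d) := by
  rw [eq_div_iff hw, sub_mul, mul_assoc, div_mul_cancel₀ _ hw]
  linear_combination z * hdet

theorem neg_mul_mobius_add_eq_inv (hdet : a * d - b * c = 1) (hw : c * z + d ≠ 0) :
    -c * ((a * z + b) / (c * z + d)) + a = (c * z + d)⁻¹ := by
  rw [← one_div, eq_div_iff hw, add_mul, mul_assoc, div_mul_cancel₀ _ hw]
  linear_combination hdet

/-- `(g·P_j)(z', 1) dz' = z^j (cz+d)^{-k} dz` at `z' = g·z`, where `k = j + m + 2`. -/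
theorem mobius_pow_mul_pow_div_sq (hdet : a * d - b * c = 1) (hw : c * z + d ≠ 0) (j m : ℕ) :
    (d * ((a * z + b) / (c * z + d)) - b) ^ j * (-c * ((a * z + b) / (c * z + d)) + a) ^ m
        / (c * z + d) ^ 2 = z ^ j * (c * z + d) ^ (-((j + m + 2 : ℕ) : ℤ)) := by
  rw [mul_mobius_sub_eq_div hdet hw, neg_mul_mobius_add_eq_inv hdet hw, zpow_neg, zpow_natCast]
  generalize c * z + d = w
  ring

end Mobius

theorem ofReal_mul_I_mul_add_ne_zero {c d y : ℝ} (hy : y ≠ 0) (hcd : c ≠ 0 ∨ d ≠ 0) :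
    (c : ℂ) * (I * y) + d ≠ 0 := by
  intro h
  have hre := congrArg re h
  have him := congrArg im h
  simp at hre him
  tauto

theorem inv_neg_two_pi_I_pow (n : ℕ) :
    ((-2 * Real.pi * I) ^ n)⁻¹ = I ^ n * ((2 * Real.pi : ℂ) ^ n)⁻¹ := by
  have hπ : (Real.pi : ℂ) ≠ 0 := by exact_mod_cast Real.pi_ne_zero
  have hinv : (-2 * Real.pi * I : ℂ)⁻¹ = I * (2 * Real.pi : ℂ)⁻¹ := by
    field_simp
    ring_nf
    simp
  rw [← inv_pow, hinv, mul_pow, inv_pow]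

theorem xi_equals_L_value_general
    (k j : ℕ) (hk : 2 ≤ k) (hj : j ≤ k - 2)
    (a b c d : ℤ) (hdet : a * d - b * c = 1)
    (f : ℂ → ℂ)
    (Lval : ℂ)
    (hL : (Nat.factorial j : ℂ) * (2 * Real.pi : ℂ) ^ (-((j : ℤ) + 1)) * Lval
      = ∫ y in Set.Ioi (0 : ℝ),
          (((c : ℂ) * (I * y) + d) ^ (-(k : ℤ)) *
            f (((a : ℂ) * (I * y) + b) / ((c : ℂ) * (I * y) + d))) * (y : ℂ) ^ (j : ℕ)) :
    (∫ y in Set.Ioi (0 : ℝ),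
        f (((a : ℂ) * (I * y) + b) / ((c : ℂ) * (I * y) + d)) *
          ((d : ℂ) * (((a : ℂ) * (I * y) + b) / ((c : ℂ) * (I * y) + d)) - b) ^ (j : ℕ) *
          (-(c : ℂ) * (((a : ℂ) * (I * y) + b) / ((c : ℂ) * (I * y) + d)) + a) ^ (k - 2 - j) *
          (I / ((c : ℂ) * (I * y) + d) ^ (2 : ℕ)))
      = (Nat.factorial j : ℂ) / (-2 * Real.pi * I) ^ (j + 1) * Lval := by
  have hdetC : (a : ℂ) * d - b * c = 1 := by exact_mod_cast hdet
  have hcd : (c : ℝ) ≠ 0 ∨ (d : ℝ) ≠ 0 := by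
    by_contra! h
    simp_all
  have hweight : j + (k - 2 - j) + 2 = k := by omega
  calc _ = ∫ y in Set.Ioi (0 : ℝ), I ^ (j + 1) *
          ((((c : ℂ) * (I * y) + d) ^ (-(k : ℤ)) *
            f (((a : ℂ) * (I * y) + b) / ((c : ℂ) * (I * y) + d))) * (y : ℂ) ^ (j : ℕ)) := by
        refine setIntegral_congr_fun measurableSet_Ioi fun y hy => ?_
        have hw := ofReal_mul_I_mul_add_ne_zero hy.ne' hcd
        push_cast at hw
        have hpoly := mobius_pow_mul_pow_div_sq hdetC hw j (k - 2 - j)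
        rw [hweight] at hpoly
        linear_combination (I * f (((a : ℂ) * (I * y) + b) / ((c : ℂ) * (I * y) + d))) * hpoly
    _ = I ^ (j + 1) * ((Nat.factorial j : ℂ) * ((2 * Real.pi : ℂ) ^ (j + 1))⁻¹ * Lval) := by
        rw [integral_const_mul, ← hL, ← Nat.cast_succ, zpow_neg, zpow_natCast]
    _ = _ := by
        rw [div_eq_mul_inv, inv_neg_two_pi_I_pow]
        ring

/-- For a cusp form `f` of weight `k` and `g = [[a,b],[c,d]] ∈ SL₂(ℤ)`
with bottom row `(c,d) ≡ (u,v) mod N`, the modular symbol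
`ξ_f(j; g) = ∫_{g·0}^{g·∞} f(z)(g·P_j)(z,1) dz` (the path `g·(iy)`, `y ∈ (0,∞)`, with
`(g·P_j)(z,1) = (dz−b)^j(−cz+a)^{k−2−j}`) equals `(j!/(−2πi)^{j+1}) L(f|_k g, j+1)`,
where `L(F, s)` is the analytic continuation of the L-series of `F = f|_k g`,
characterised by the Mellin transform `Γ(s)(2π)^{−s} L(F,s) = ∫_0^∞ F(iy) y^{s−1} dy`. -/
theorem xi_equals_L_value
    (N : ℕ) (k j : ℕ) (hk : 2 ≤ k) (hj : j ≤ k - 2)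
    (a b c d : ℤ) (hdet : a * d - b * c = 1)
    (u v : ZMod N) (hc : ((c : ℤ) : ZMod N) = u) (hd : ((d : ℤ) : ZMod N) = v)
    (f : ℂ → ℂ)
    (Lval : ℂ)
    (hL : (Nat.factorial j : ℂ) * (2 * Real.pi : ℂ) ^ (-((j : ℤ) + 1)) * Lval
      = ∫ y in Set.Ioi (0 : ℝ),
          (((c : ℂ) * (I * y) + d) ^ (-(k : ℤ)) *
            f (((a : ℂ) * (I * y) + b) / ((c : ℂ) * (I * y) + d))) * (y : ℂ) ^ (j : ℕ)) :
    (∫ y in Set.Ioi (0 : ℝ),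
        f (((a : ℂ) * (I * y) + b) / ((c : ℂ) * (I * y) + d)) *
          ((d : ℂ) * (((a : ℂ) * (I * y) + b) / ((c : ℂ) * (I * y) + d)) - b) ^ (j : ℕ) *
          (-(c : ℂ) * (((a : ℂ) * (I * y) + b) / ((c : ℂ) * (I * y) + d)) + a) ^ (k - 2 - j) *
          (I / ((c : ℂ) * (I * y) + d) ^ (2 : ℕ)))
      = (Nat.factorial j : ℂ) / (-2 * Real.pi * I) ^ (j + 1) * Lval :=
  xi_equals_L_value_general k j hk hj a b c d hdet f Lval hL
end

section
/- Let k = 4 and suppose ξ : {0,…,k−2} × E_N → C satisfies the three Manin relations (1) ξ(j; u, v) + (−1)^j ξ(k−2−j; v, −u) = 0, (2) ξ(j; u, v) + ∑_{i=0}^{k−2−j} (−1)^{k−2−i} C(k−2−j, i) ξ(i; v, −u−v) + ∑_{i=k−2−j}^{k−2} (−1)^i C(j, i−k+2+j) ξ(i; −u−v, u) = 0, and (3) ξ(j; u, v) = (−1)^{k−2} ξ(j; −u, −v), for all j and (u,v) ∈ E_N, and suppose additionally ξ(j; u, v) = 0 whenever j ≠ 1 and (gcd(u,N)=1 or gcd(v,N)=1).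 Then ξ(1; 0, 1) = 0. -/
open Finset

lemma val_one_gcd (N : ℕ) : Nat.gcd (ZMod.val (1 : ZMod N)) N = 1 := by
  match N with
  | 0 => rfl
  | 1 => rfl
  | (n+2) =>
    haveI : Fact (1 < n + 2) := ⟨by omega⟩
    rw [ZMod.val_one]
    simp

lemma val_neg_one_gcd (N : ℕ) : Nat.gcd (ZMod.val (-1 : ZMod N)) N = 1 := by
  match N with
  | 0 => rfl
  | 1 => rfl
  | (n+2) =>
    rw [ZMod.val_neg_one]
    show Nat.gcd (n+1) (n+2) = 1
    rw [show n+2 = 1+(n+1) by ring, Nat.gcd_add_self_right, Nat.gcd_one_right]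

/-- Manin-relation combinatorics in weight `k = 4`. If
`ξ : {0,…,2} × E_N → ℂ` satisfies the three Manin relations and vanishes at all
`(j; u, v)` with `j ≠ 1` and (`gcd(u,N) = 1` or `gcd(v,N) = 1`), then `ξ(1; 0, 1) = 0`. -/
theorem manin_relations_weight_four (N : ℕ) (ξ : ℕ → ZMod N → ZMod N → ℂ)
    (rel1 : ∀ j : ℕ, j ≤ 2 → ∀ u v : ZMod N,
      Nat.gcd (Nat.gcd (ZMod.val u) (ZMod.val v)) N = 1 →
      ξ j u v + (-1 : ℂ) ^ j * ξ (2 - j) v (-u) = 0)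
    (rel2 : ∀ j : ℕ, j ≤ 2 → ∀ u v : ZMod N,
      Nat.gcd (Nat.gcd (ZMod.val u) (ZMod.val v)) N = 1 →
      ξ j u v
        + ∑ i ∈ Finset.range (2 - j + 1),
            (-1 : ℂ) ^ (2 - i) * (Nat.choose (2 - j) i : ℂ) * ξ i v (-u - v)
        + ∑ i ∈ Finset.Icc (2 - j) 2,
            (-1 : ℂ) ^ i * (Nat.choose j (i - (2 - j)) : ℂ) * ξ i (-u - v) u = 0)
    (rel3 : ∀ j : ℕ, j ≤ 2 → ∀ u v : ZMod N,
      Nat.gcd (Nat.gcd (ZMod.val u) (ZMod.val v)) N = 1 →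
      ξ j u v - (-1 : ℂ) ^ (4 - 2) * ξ j (-u) (-v) = 0)
    (vanish : ∀ j : ℕ, j ≤ 2 → j ≠ 1 → ∀ u v : ZMod N,
      Nat.gcd (Nat.gcd (ZMod.val u) (ZMod.val v)) N = 1 →
      (Nat.gcd (ZMod.val u) N = 1 ∨ Nat.gcd (ZMod.val v) N = 1) →
      ξ j u v = 0) :
    ξ 1 0 1 = 0 := by
  have h1 := val_one_gcd N
  have hm1 := val_neg_one_gcd N
  have hv0 : ZMod.val (0 : ZMod N) = 0 := ZMod.val_zero
  have g1 : Nat.gcd (Nat.gcd (ZMod.val (-1 : ZMod N)) (ZMod.val (0 : ZMod N))) N = 1 := by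
    rw [hv0, Nat.gcd_zero_right]; exact hm1
  have g2 : Nat.gcd (Nat.gcd (ZMod.val (0 : ZMod N)) (ZMod.val (1 : ZMod N))) N = 1 := by
    rw [hv0, Nat.gcd_zero_left]; exact h1
  have g3 : Nat.gcd (Nat.gcd (ZMod.val (1 : ZMod N)) (ZMod.val (-1 : ZMod N))) N = 1 := by
    have hd : Nat.gcd (Nat.gcd (ZMod.val (1 : ZMod N)) (ZMod.val (-1 : ZMod N))) N ∣
        Nat.gcd (ZMod.val (1 : ZMod N)) N :=
      Nat.dvd_gcd ((Nat.gcd_dvd_left _ _).trans (Nat.gcd_dvd_left _ _)) (Nat.gcd_dvd_right _ _)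
    exact Nat.eq_one_of_dvd_one (h1 ▸ hd)
  have key := rel2 0 (by norm_num) (-1) 0 g1
  have e1 : ξ 0 (-1 : ZMod N) 0 = 0 := vanish 0 (by norm_num) (by norm_num) _ _ g1 (Or.inl hm1)
  have e2 : ξ 0 (0 : ZMod N) 1 = 0 := vanish 0 (by norm_num) (by norm_num) _ _ g2 (Or.inr h1)
  have e3 : ξ 2 (0 : ZMod N) 1 = 0 := vanish 2 (by norm_num) (by norm_num) _ _ g2 (Or.inr h1)
  have e4 : ξ 2 (1 : ZMod N) (-1) = 0 := vanish 2 (by norm_num) (by norm_num) _ _ g3 (Or.inl h1)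
  have hsimp : (-(-1) - 0 : ZMod N) = 1 := by ring
  rw [hsimp] at key
  rw [show (2:ℕ) - 0 + 1 = 3 from rfl, Finset.sum_range_succ, Finset.sum_range_succ,
    Finset.sum_range_one, show Finset.Icc (2-0) 2 = {2} from rfl, Finset.sum_singleton] at key
  norm_num [e1, e2, e3, e4] at key
  exact key
end

section
/- Let k ≥ 6 be an integer and let ξ : {0,…,k−2} × E_N → C satisfy the Manin relations (1) ξ(j; u, v) + (−1)^j ξ(k−2−j; v, −u) = 0 and (2) ξ(j; u, v) + ∑_{i=0}^{k−2−j} (−1)^{k−2−i} C(k−2−j, i) ξ(i; v, −u−v) + ∑_{i=k−2−j}^{k−2} (−1)^i C(j, i−k+2+j) ξ(i; −u−v, u) = 0 for all j ∈ {0,…,k−2} and (u,v) ∈ E_N. Suppose ξ(j; u, v) = 0 whenever j ∉ {1, k−3} and at least one of gcd(u,N) = 1 or gcd(v,N) = 1 holds. Then ξ(1; 0, 1) = 0 and ξ(k−3; 0, 1) = 0. -/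
open Finset

/-!
Only the terms with index `1` or `k - 3` survive in the relations at the points
`(0, c)`, `(c, -c)`, `(-c, 0)` with `c` a unit, since each of these pairs has a unit coordinate.
Relation (2) with `j = 2`, relation (2) with `j = 1` and relation (1) then form a small
linear system in the values `ξ(1; ·)` and `ξ(k - 3; ·)` at these points, which forces
`(k - 2) ξ(k - 3; 0, c) = 0` and `(k - 2)² ξ(1; 0, c) = 0`.
-/

namespace ZMod

lemma coprime_val_of_isUnit {N : ℕ} {u : ZMod N} (hu : IsUnit u) : u.val.Coprime N := by
  simpa only [hu.unit_spec] using val_coe_unit_coprime hu.unit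

lemma gcd_gcd_val_eq_one_of_isUnit_or {N : ℕ} {u v : ZMod N} (h : IsUnit u ∨ IsUnit v) :
    Nat.gcd (Nat.gcd u.val v.val) N = 1 := by
  rcases h with hu | hv
  · exact (coprime_val_of_isUnit hu).coprime_dvd_left (Nat.gcd_dvd_left _ _)
  · exact (coprime_val_of_isUnit hv).coprime_dvd_left (Nat.gcd_dvd_right _ _)

end ZMod

/-- Relation (1); the condition on `(u, v)` says that it lies in `E_N`. -/
def ManinRelationOne (N k : ℕ) (ξ : ℕ → ZMod N → ZMod N → ℂ) : Prop :=
  ∀ j : ℕ, j ≤ k - 2 → ∀ u v : ZMod N,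
    Nat.gcd (Nat.gcd (ZMod.val u) (ZMod.val v)) N = 1 →
    ξ j u v + (-1 : ℂ) ^ j * ξ (k - 2 - j) v (-u) = 0

def ManinRelationTwo (N k : ℕ) (ξ : ℕ → ZMod N → ZMod N → ℂ) : Prop :=
  ∀ j : ℕ, j ≤ k - 2 → ∀ u v : ZMod N,
    Nat.gcd (Nat.gcd (ZMod.val u) (ZMod.val v)) N = 1 →
    ξ j u v
      + ∑ i ∈ Finset.range (k - 2 - j + 1),
          (-1 : ℂ) ^ (k - 2 - i) * (Nat.choose (k - 2 - j) i : ℂ) * ξ i v (-u - v)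
      + ∑ i ∈ Finset.Icc (k - 2 - j) (k - 2),
          (-1 : ℂ) ^ i * (Nat.choose j (i - (k - 2 - j)) : ℂ) * ξ i (-u - v) u = 0

def VanishesOffOneAndKSubThree (N k : ℕ) (ξ : ℕ → ZMod N → ZMod N → ℂ) : Prop :=
  ∀ j : ℕ, j ≤ k - 2 → j ≠ 1 → j ≠ k - 3 → ∀ u v : ZMod N,
    Nat.gcd (Nat.gcd (ZMod.val u) (ZMod.val v)) N = 1 →
    (Nat.gcd (ZMod.val u) N = 1 ∨ Nat.gcd (ZMod.val v) N = 1) →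
    ξ j u v = 0

section

variable {N k : ℕ} {ξ : ℕ → ZMod N → ZMod N → ℂ}

lemma VanishesOffOneAndKSubThree.apply_of_isUnit (h : VanishesOffOneAndKSubThree N k ξ)
    {j : ℕ} (hj : j ≤ k - 2) (hj1 : j ≠ 1) (hj3 : j ≠ k - 3) {u v : ZMod N}
    (huv : IsUnit u ∨ IsUnit v) : ξ j u v = 0 :=
  h j hj hj1 hj3 u v (ZMod.gcd_gcd_val_eq_one_of_isUnit_or huv)
    (huv.imp ZMod.coprime_val_of_isUnit ZMod.coprime_val_of_isUnit)

lemma VanishesOffOneAndKSubThree.sum_mul_eq (h : VanishesOffOneAndKSubThree N k ξ)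
    (hk : k ≠ 4) {s : Finset ℕ} (hs : ∀ i ∈ s, i ≤ k - 2) (c : ℕ → ℂ) {u v : ZMod N}
    (huv : IsUnit u ∨ IsUnit v) :
    ∑ i ∈ s, c i * ξ i u v = (if 1 ∈ s then c 1 * ξ 1 u v else 0)
      + (if k - 3 ∈ s then c (k - 3) * ξ (k - 3) u v else 0) := by
  rw [← sum_ite_eq' s 1 fun i => c i * ξ i u v,
    ← sum_ite_eq' s (k - 3) fun i => c i * ξ i u v, ← sum_add_distrib]
  refine sum_congr rfl fun i hi => ?_
  by_cases h1 : i = 1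
  · subst h1; simp [show 1 ≠ k - 3 by omega]
  by_cases h3 : i = k - 3
  · subst h3; simp [h1]
  simp [h1, h3, h.apply_of_isUnit (hs i hi) h1 h3 huv]

lemma ManinRelationOne.apply_one (h : ManinRelationOne N k ξ) (hk : 3 ≤ k) {u v : ZMod N}
    (huv : IsUnit u ∨ IsUnit v) : ξ 1 u v = ξ (k - 3) v (-u) := by
  have := h 1 (by omega) u v (ZMod.gcd_gcd_val_eq_one_of_isUnit_or huv)
  rw [show k - 2 - 1 = k - 3 by omega] at this
  linear_combination this

lemma ManinRelationOne.apply_kSubThree (h : ManinRelationOne N k ξ) (hk : 3 ≤ k) {u v : ZMod N}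
    (huv : IsUnit u ∨ IsUnit v) : ξ (k - 3) u v + (-1) ^ (k - 3) * ξ 1 v (-u) = 0 := by
  simpa only [show k - 2 - (k - 3) = 1 by omega] using
    h (k - 3) (by omega) u v (ZMod.gcd_gcd_val_eq_one_of_isUnit_or huv)

lemma ManinRelationTwo.apply_two (h : ManinRelationTwo N k ξ)
    (hξ : VanishesOffOneAndKSubThree N k ξ) (hk : 6 ≤ k) {u v w : ZMod N} (hsum : u + v + w = 0)
    (huv : IsUnit u ∨ IsUnit v) (hvw : IsUnit v ∨ IsUnit w) (hwu : IsUnit w ∨ IsUnit u) :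
    ((k : ℂ) - 4) * ξ 1 v w + 2 * ξ (k - 3) w u = 0 := by
  obtain rfl : w = -u - v := by linear_combination hsum
  have := h 2 (by omega) u v (ZMod.gcd_gcd_val_eq_one_of_isUnit_or huv)
  rw [hξ.sum_mul_eq (by omega) (by simp; omega) _ hvw, hξ.sum_mul_eq (by omega) (by simp) _ hwu,
    hξ.apply_of_isUnit (j := 2) (by omega) (by omega) (by omega) huv] at this
  simp only [mem_range, mem_Icc] at this
  rw [if_pos (by omega), if_neg (by omega), if_neg (by omega), if_pos (by omega),
    show k - 2 - 1 = k - 3 by omega, show k - 2 - 2 = k - 4 by omega,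
    show k - 3 - (k - 4) = 1 by omega] at this
  simp only [Nat.choose_one_right, Nat.cast_sub (by omega : 4 ≤ k)] at this
  have hsign : (-1 : ℂ) ^ (k - 3) * (-1) ^ (k - 3) = 1 := by rw [← mul_pow]; norm_num
  linear_combination (-1 : ℂ) ^ (k - 3) * this
    - (((k : ℂ) - 4) * ξ 1 v (-u - v) + 2 * ξ (k - 3) (-u - v) u) * hsign

lemma ManinRelationTwo.apply_one (h : ManinRelationTwo N k ξ)
    (hξ : VanishesOffOneAndKSubThree N k ξ) (hk : 5 ≤ k) {u v w : ZMod N} (hsum : u + v + w = 0)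
    (huv : IsUnit u ∨ IsUnit v) (hvw : IsUnit v ∨ IsUnit w) (hwu : IsUnit w ∨ IsUnit u) :
    ξ 1 u v + (-1) ^ (k - 3) * ((k : ℂ) - 3) * ξ 1 v w - ξ (k - 3) v w
      + (-1) ^ (k - 3) * ξ (k - 3) w u = 0 := by
  obtain rfl : w = -u - v := by linear_combination hsum
  have := h 1 (by omega) u v (ZMod.gcd_gcd_val_eq_one_of_isUnit_or huv)
  rw [hξ.sum_mul_eq (by omega) (by simp; omega) _ hvw,
    hξ.sum_mul_eq (by omega) (by simp) _ hwu] at this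
  simp only [mem_range, mem_Icc] at this
  rw [if_pos (by omega), if_pos (by omega), if_neg (by omega), if_pos (by omega),
    show k - 2 - 1 = k - 3 by omega, show k - 2 - (k - 3) = 1 by omega,
    Nat.sub_self, Nat.choose_one_right, Nat.choose_self, Nat.choose_zero_right,
    Nat.cast_sub (by omega : 3 ≤ k)] at this
  linear_combination this

lemma eval_kSubThree_zero_eq_zero_of_isUnit (h1 : ManinRelationOne N k ξ)
    (h2 : ManinRelationTwo N k ξ) (hξ : VanishesOffOneAndKSubThree N k ξ) (hk : 6 ≤ k)
    {c : ZMod N} (hc : IsUnit c) :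
    ξ (k - 3) 0 c = 0 := by
  have hC := h2.apply_two hξ hk (u := c) (v := -c) (w := 0) (by ring)
    (Or.inl hc) (Or.inl hc.neg) (Or.inr hc)
  have hH := h1.apply_one (by omega) (u := -c) (v := 0) (Or.inl hc.neg)
  rw [neg_neg] at hH
  have hk2 : (k : ℂ) - 2 ≠ 0 := sub_ne_zero.mpr (by norm_cast; omega)
  have : ((k : ℂ) - 2) * ξ (k - 3) 0 c = 0 := by linear_combination hC - ((k : ℂ) - 4) * hH
  exact (mul_eq_zero.mp this).resolve_left hk2

lemma eval_one_zero_eq_zero_of_isUnit (h1 : ManinRelationOne N k ξ)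
    (h2 : ManinRelationTwo N k ξ) (hξ : VanishesOffOneAndKSubThree N k ξ) (hk : 6 ≤ k)
    {c : ZMod N} (hc : IsUnit c) :
    ξ 1 0 c = 0 := by
  have hA := h2.apply_two hξ hk (u := -c) (v := 0) (w := c) (by ring)
    (Or.inl hc.neg) (Or.inr hc) (Or.inl hc)
  have hB := h2.apply_two hξ hk (u := 0) (v := c) (w := -c) (by ring)
    (Or.inr hc) (Or.inl hc) (Or.inl hc.neg)
  have hD := h2.apply_one hξ (by omega) (u := 0) (v := c) (w := -c) (by ring)
    (Or.inr hc) (Or.inl hc) (Or.inl hc.neg)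
  have hF := h1.apply_kSubThree (by omega) (u := -c) (v := 0) (Or.inl hc.neg)
  rw [neg_neg] at hF
  have hsign : (-1 : ℂ) ^ (k - 3) * (-1) ^ (k - 3) = 1 := by rw [← mul_pow]; norm_num
  have hk2 : ((k : ℂ) - 2) ^ 2 ≠ 0 := pow_ne_zero 2 (sub_ne_zero.mpr (by norm_cast; omega))
  have : ((k : ℂ) - 2) ^ 2 * ξ 1 0 c = 0 := by
    linear_combination 2 * ((k : ℂ) - 4) * hD + ((k : ℂ) - 4) * hA
      - 2 * (-1 : ℂ) ^ (k - 3) * ((k : ℂ) - 3) * hB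
      + 2 * (-1 : ℂ) ^ (k - 3) * ((k : ℂ) - 2) * hF - 2 * ((k : ℂ) - 2) * ξ 1 0 c * hsign
  exact (mul_eq_zero.mp this).resolve_left hk2

end

/-- Manin-relation combinatorics in weight `k ≥ 6`. If
`ξ : {0,…,k−2} × E_N → ℂ` satisfies the two Manin relations (1) and (2) and vanishes at
all `(j; u, v)` with `j ∉ {1, k−3}` and (`gcd(u,N) = 1` or `gcd(v,N) = 1`), then
`ξ(1; 0, 1) = 0` and `ξ(k−3; 0, 1) = 0`. -/
theorem manin_relations_high_weight (N : ℕ) (k : ℕ) (hk : 6 ≤ k)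
    (ξ : ℕ → ZMod N → ZMod N → ℂ)
    (rel1 : ∀ j : ℕ, j ≤ k - 2 → ∀ u v : ZMod N,
      Nat.gcd (Nat.gcd (ZMod.val u) (ZMod.val v)) N = 1 →
      ξ j u v + (-1 : ℂ) ^ j * ξ (k - 2 - j) v (-u) = 0)
    (rel2 : ∀ j : ℕ, j ≤ k - 2 → ∀ u v : ZMod N,
      Nat.gcd (Nat.gcd (ZMod.val u) (ZMod.val v)) N = 1 →
      ξ j u v
        + ∑ i ∈ Finset.range (k - 2 - j + 1),
            (-1 : ℂ) ^ (k - 2 - i) * (Nat.choose (k - 2 - j) i : ℂ) * ξ i v (-u - v)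
        + ∑ i ∈ Finset.Icc (k - 2 - j) (k - 2),
            (-1 : ℂ) ^ i * (Nat.choose j (i - (k - 2 - j)) : ℂ) * ξ i (-u - v) u = 0)
    (vanish : ∀ j : ℕ, j ≤ k - 2 → j ≠ 1 → j ≠ k - 3 → ∀ u v : ZMod N,
      Nat.gcd (Nat.gcd (ZMod.val u) (ZMod.val v)) N = 1 →
      (Nat.gcd (ZMod.val u) N = 1 ∨ Nat.gcd (ZMod.val v) N = 1) →
      ξ j u v = 0) :
    ξ 1 0 1 = 0 ∧ ξ (k - 3) 0 1 = 0 :=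
  ⟨eval_one_zero_eq_zero_of_isUnit rel1 rel2 vanish hk isUnit_one,
    eval_kSubThree_zero_eq_zero_of_isUnit rel1 rel2 vanish hk isUnit_one⟩
end
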